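/- arXiv:1703.00135 — 4 statements merged into one kernel-verified Lean document; each statement's English description precedes it below -/
import Mathlib

section
/- Let 1 ≤ s ≤ N, 1 ≤ k ≤ m, λ > 0, and suppose A ∈ ℂ^{m×N} satisfies the ℓ²-robust null space property of order (s,k) with weight λ and constants ρ ∈ (0,1), τ > 0. Let x ∈ ℂ^N, c ∈ ℂ^m, y ∈ ℂ^m and ε > 0 satisfy ‖Ax + c − y‖₂ ≤ ε, and let (x̂, ĉ) be a minimizer of ‖z‖₁ + λ‖d‖₁ over pairs (z,d) ∈ ℂ^N × ℂ^m subject to ‖Az + d − y‖₂ ≤ ε. Then ‖x − x̂‖₁ + λ‖c − ĉ‖₁ ≤ (2(1+ρ)/(1−ρ))·(σ_s(x)₁ + λ·σ_k(c)₁) + (4τ/(1−ρ))·√(s + λ²k)·ε. -/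
open Finset Matrix MeasureTheory

noncomputable def l1norm {n : ℕ} (x : Fin n → ℂ) : ℝ := ∑ i, ‖x i‖

noncomputable def l2norm {n : ℕ} (x : Fin n → ℂ) : ℝ := Real.sqrt (∑ i, ‖x i‖ ^ 2)

/-- The vector equal to `x` on `S` and zero elsewhere. -/
def restr {n : ℕ} (x : Fin n → ℂ) (S : Finset (Fin n)) : Fin n → ℂ :=
  fun i => if i ∈ S then x i else 0

/-- `x` has at most `s` nonzero entries. -/
def IsSparse {n : ℕ} (s : ℕ) (x : Fin n → ℂ) : Prop :=
  ∃ S : Finset (Fin n), S.card ≤ s ∧ ∀ i ∉ S, x i = 0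

/-- Best `s`-term approximation error of `x` in the `ℓ¹` norm. -/
noncomputable def sigma1 {n : ℕ} (s : ℕ) (x : Fin n → ℂ) : ℝ :=
  sInf {t : ℝ | ∃ z : Fin n → ℂ, IsSparse s z ∧ t = l1norm (x - z)}

/-- `η_{s,k}(λ) = (s + λ²k)/min{s, λ²k}`. -/
noncomputable def etaSK (s k : ℕ) (lam : ℝ) : ℝ :=
  ((s : ℝ) + lam ^ 2 * k) / min (s : ℝ) (lam ^ 2 * k)

/-- The ℓ¹-robust null space property of order (s,k) with weight lam, constants ρ, τ. -/
def L1RNSP {m N : ℕ} (A : Matrix (Fin m) (Fin N) ℂ) (s k : ℕ) (lam ρ τ : ℝ) : Prop :=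
  ∀ (x : Fin N → ℂ) (c : Fin m → ℂ) (S : Finset (Fin N)) (T : Finset (Fin m)),
    S.card ≤ s → T.card ≤ k →
      l1norm (restr x S) + lam * l1norm (restr c T) ≤
        ρ * (l1norm (restr x Sᶜ) + lam * l1norm (restr c Tᶜ)) + τ * l2norm (A.mulVec x + c)

/-- The ℓ²-robust null space property of order (s,k) with weight lam, constants ρ, τ. -/
def L2RNSP {m N : ℕ} (A : Matrix (Fin m) (Fin N) ℂ) (s k : ℕ) (lam ρ τ : ℝ) : Prop :=
  ∀ (x : Fin N → ℂ) (c : Fin m → ℂ) (S : Finset (Fin N)) (T : Finset (Fin m)),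
    S.card ≤ s → T.card ≤ k →
      Real.sqrt (l2norm (restr x S) ^ 2 + l2norm (restr c T) ^ 2) ≤
        (ρ / Real.sqrt ((s : ℝ) + lam ^ 2 * k)) *
            (l1norm (restr x Sᶜ) + lam * l1norm (restr c Tᶜ)) +
          τ * l2norm (A.mulVec x + c)

/-- `A` satisfies the two-sided RIP inequality for the sparse corruptions problem of
order `(s,k)` with constant `δ`. -/
def RIPCor {m N : ℕ} (A : Matrix (Fin m) (Fin N) ℂ) (s k : ℕ) (δ : ℝ) : Prop :=
  ∀ (x : Fin N → ℂ) (c : Fin m → ℂ), IsSparse s x → IsSparse k c →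
    (1 - δ) * (l2norm x ^ 2 + l2norm c ^ 2) ≤ l2norm (A.mulVec x + c) ^ 2 ∧
      l2norm (A.mulVec x + c) ^ 2 ≤ (1 + δ) * (l2norm x ^ 2 + l2norm c ^ 2)

/-- `A` satisfies the RIP inequality for sparse vectors of order `s` with constant `δ`. -/
def RIPSparse {m N : ℕ} (A : Matrix (Fin m) (Fin N) ℂ) (s : ℕ) (δ : ℝ) : Prop :=
  ∀ x : Fin N → ℂ, IsSparse s x →
    (1 - δ) * l2norm x ^ 2 ≤ l2norm (A.mulVec x) ^ 2 ∧
      l2norm (A.mulVec x) ^ 2 ≤ (1 + δ) * l2norm x ^ 2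

/-- `(xh, ch)` is a minimizer of `‖z‖₁ + lam ‖d‖₁` subject to `‖Az + d - y‖₂ ≤ ε`. -/
def IsMinimizer {m N : ℕ} (A : Matrix (Fin m) (Fin N) ℂ) (y : Fin m → ℂ) (lam ε : ℝ)
    (xh : Fin N → ℂ) (ch : Fin m → ℂ) : Prop :=
  l2norm (A.mulVec xh + ch - y) ≤ ε ∧
    ∀ (z : Fin N → ℂ) (d : Fin m → ℂ), l2norm (A.mulVec z + d - y) ≤ ε →
      l1norm xh + lam * l1norm ch ≤ l1norm z + lam * l1norm d

/-- Spectral norm of a matrix (operator norm w.r.t. Euclidean norms). -/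
noncomputable def specNorm {a b : ℕ} (B : Matrix (Fin a) (Fin b) ℂ) : ℝ :=
  ‖LinearMap.toContinuousLinearMap (Matrix.toEuclideanLin B)‖

/-- `σ_{s,k}(A)`: the maximum spectral norm over `k × s` submatrices of `A`. -/
noncomputable def sigmaSK {m N : ℕ} (A : Matrix (Fin m) (Fin N) ℂ) (s k : ℕ) : ℝ :=
  sSup {t : ℝ | ∃ (S : Finset (Fin N)) (T : Finset (Fin m)) (hS : S.card = s) (hT : T.card = k),
    t = specNorm (A.submatrix (fun i : Fin k => ((T.orderIsoOfFin hT i : Fin m)))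
      (fun j : Fin s => ((S.orderIsoOfFin hS j : Fin N))))}

/-!
Cauchy–Schwarz on the index sets `S` and `T` (`‖v_S‖₁ ≤ √s ‖v_S‖₂`) turns the `ℓ²`-robust null
space property into the `ℓ¹`-robust one with `τ` replaced by `τ √(s + λ²k)`. For the error
`(v, e) = (x - x̂, c - ĉ)`, minimality of `(x̂, ĉ)` puts it in the cone where the weighted `ℓ¹`
mass off `S ∪ T` is at most the mass on `S ∪ T` plus twice the tail of `(x, c)`; combined with the
`ℓ¹`-robust NSP this gives the estimate, with `‖Av + e‖₂ ≤ 2ε` since both pairs are feasible and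
`S`, `T` chosen to realise the best `s`- and `k`-term approximations.
-/

lemma l1norm_eq_norm {n : ℕ} (x : Fin n → ℂ) : l1norm x = ‖WithLp.toLp 1 x‖ :=
  (PiLp.norm_eq_of_L1 _).symm

lemma l2norm_eq_norm {n : ℕ} (x : Fin n → ℂ) : l2norm x = ‖WithLp.toLp 2 x‖ :=
  (EuclideanSpace.norm_eq _).symm

lemma l2norm_sub_le {n : ℕ} (a b : Fin n → ℂ) : l2norm (a - b) ≤ l2norm a + l2norm b := by
  simpa only [l2norm_eq_norm, WithLp.toLp_sub] using norm_sub_le _ _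

lemma restr_sub {n : ℕ} (x z : Fin n → ℂ) (S : Finset (Fin n)) :
    restr (x - z) S = restr x S - restr z S := by
  ext i
  by_cases hi : i ∈ S <;> simp [restr, hi]

lemma l1norm_eq_restr_add_restr_compl {n : ℕ} (x : Fin n → ℂ) (S : Finset (Fin n)) :
    l1norm x = l1norm (restr x S) + l1norm (restr x Sᶜ) := by
  rw [l1norm, l1norm, l1norm, ← Finset.sum_add_distrib]
  refine Finset.sum_congr rfl fun i _ => ?_
  by_cases hi : i ∈ S <;> simp [restr, hi]

lemma l1norm_restr_compl_sub_le {n : ℕ} (x z : Fin n → ℂ) (S : Finset (Fin n)) :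
    l1norm (restr (x - z) Sᶜ) ≤
      l1norm z - l1norm x + l1norm (restr (x - z) S) + 2 * l1norm (restr x Sᶜ) := by
  have hx := l1norm_eq_restr_add_restr_compl x S
  have hz := l1norm_eq_restr_add_restr_compl z S
  have hS : l1norm (restr x S) - l1norm (restr z S) ≤ l1norm (restr (x - z) S) := by
    simpa only [l1norm_eq_norm, restr_sub, WithLp.toLp_sub] using norm_sub_norm_le _ _
  have hSc : l1norm (restr (x - z) Sᶜ) ≤ l1norm (restr x Sᶜ) + l1norm (restr z Sᶜ) := by
    simpa only [l1norm_eq_norm, restr_sub, WithLp.toLp_sub] using norm_sub_le _ _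
  linarith

lemma exists_card_le_l1norm_restr_compl_le_sigma1 {n : ℕ} (s : ℕ) (x : Fin n → ℂ) :
    ∃ S : Finset (Fin n), S.card ≤ s ∧ l1norm (restr x Sᶜ) ≤ sigma1 s x := by
  obtain ⟨S, hS, hmin⟩ := ((Finset.univ : Finset (Finset (Fin n))).filter
    (·.card ≤ s)).exists_min_image (fun S => l1norm (restr x Sᶜ)) ⟨∅, by simp⟩
  refine ⟨S, (Finset.mem_filter.mp hS).2, le_csInf ⟨_, 0, ⟨∅, by simp, fun _ _ => rfl⟩, rfl⟩ ?_⟩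
  rintro _ ⟨z, ⟨T, hT, hz⟩, rfl⟩
  refine (hmin T (by simpa using hT)).trans (Finset.sum_le_sum fun i _ => ?_)
  by_cases hi : i ∈ T <;> simp [restr, hi, hz]

lemma l1norm_restr_le_sqrt_mul_l2norm {n s : ℕ} (x : Fin n → ℂ) {S : Finset (Fin n)}
    (hS : S.card ≤ s) : l1norm (restr x S) ≤ √s * l2norm (restr x S) := by
  have hsupp : l1norm (restr x S) = ∑ i ∈ S, ‖restr x S i‖ :=
    (Finset.sum_subset (Finset.subset_univ S) fun i _ hi => by simp [restr, hi]).symm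
  rw [l2norm, ← Real.sqrt_mul (Nat.cast_nonneg s)]
  refine (le_abs_self _).trans (Real.abs_le_sqrt ?_)
  rw [hsupp]
  calc (∑ i ∈ S, ‖restr x S i‖) ^ 2 ≤ S.card * ∑ i ∈ S, ‖restr x S i‖ ^ 2 :=
        sq_sum_le_card_mul_sum_sq
    _ ≤ s * ∑ i, ‖restr x S i‖ ^ 2 := by
        gcongr
        exact Finset.subset_univ S

lemma sqrt_mul_add_sqrt_mul_le {p q : ℝ} (hp : 0 ≤ p) (hq : 0 ≤ q) (a b : ℝ) :
    √p * a + √q * b ≤ √(p + q) * √(a ^ 2 + b ^ 2) := by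
  rw [← Real.sqrt_mul (add_nonneg hp hq)]
  refine (le_abs_self _).trans (Real.abs_le_sqrt ?_)
  nlinarith [Real.sq_sqrt hp, Real.sq_sqrt hq, sq_nonneg (√p * b - √q * a)]

theorem L2RNSP.l1RNSP {m N : ℕ} {A : Matrix (Fin m) (Fin N) ℂ} {s k : ℕ} {lam ρ τ : ℝ}
    (h : L2RNSP A s k lam ρ τ) (hlam : 0 ≤ lam) (hsk : 0 < (s : ℝ) + lam ^ 2 * k) :
    L1RNSP A s k lam ρ (τ * √((s : ℝ) + lam ^ 2 * k)) := by
  intro x c S T hS hT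
  set r := √((s : ℝ) + lam ^ 2 * k)
  have hr : 0 < r := Real.sqrt_pos.mpr hsk
  have hc : lam * l1norm (restr c T) ≤ √(lam ^ 2 * k) * l2norm (restr c T) := by
    rw [Real.sqrt_mul (sq_nonneg lam), Real.sqrt_sq hlam, mul_assoc]
    exact mul_le_mul_of_nonneg_left (l1norm_restr_le_sqrt_mul_l2norm c hT) hlam
  calc l1norm (restr x S) + lam * l1norm (restr c T)
      ≤ r * √(l2norm (restr x S) ^ 2 + l2norm (restr c T) ^ 2) :=
        (add_le_add (l1norm_restr_le_sqrt_mul_l2norm x hS) hc).trans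
          (sqrt_mul_add_sqrt_mul_le (Nat.cast_nonneg s) (by positivity) _ _)
    _ ≤ r * ((ρ / r) * (l1norm (restr x Sᶜ) + lam * l1norm (restr c Tᶜ)) +
          τ * l2norm (A.mulVec x + c)) :=
        mul_le_mul_of_nonneg_left (h x c S T hS hT) hr.le
    _ = _ := by field_simp

theorem L1RNSP.l1norm_sub_add_le {m N : ℕ} {A : Matrix (Fin m) (Fin N) ℂ} {s k : ℕ}
    {lam ρ τ : ℝ} (h : L1RNSP A s k lam ρ τ) (hlam : 0 ≤ lam) (hρ0 : 0 ≤ ρ) (hρ1 : ρ < 1)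
    {x z : Fin N → ℂ} {c d : Fin m → ℂ}
    (hzd : l1norm z + lam * l1norm d ≤ l1norm x + lam * l1norm c)
    {S : Finset (Fin N)} {T : Finset (Fin m)} (hS : S.card ≤ s) (hT : T.card ≤ k) :
    l1norm (x - z) + lam * l1norm (c - d) ≤
      (2 * (1 + ρ) / (1 - ρ)) * (l1norm (restr x Sᶜ) + lam * l1norm (restr c Tᶜ)) +
        (2 * τ / (1 - ρ)) * l2norm (A.mulVec (x - z) + (c - d)) := by
  set P := l1norm (restr (x - z) S) + lam * l1norm (restr (c - d) T)
  set Q := l1norm (restr (x - z) Sᶜ) + lam * l1norm (restr (c - d) Tᶜ)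
  set σ := l1norm (restr x Sᶜ) + lam * l1norm (restr c Tᶜ)
  set E := l2norm (A.mulVec (x - z) + (c - d))
  have hnsp : P ≤ ρ * Q + τ * E := h _ _ S T hS hT
  have hcone : Q ≤ P + 2 * σ := by
    have hx := l1norm_restr_compl_sub_le x z S
    have hc := mul_le_mul_of_nonneg_left (l1norm_restr_compl_sub_le c d T) hlam
    linarith
  have hρ : 0 < 1 - ρ := by linarith
  have hQ : Q ≤ (2 * σ + τ * E) / (1 - ρ) := by
    rw [le_div_iff₀ hρ]
    linarith
  have hsplit : l1norm (x - z) + lam * l1norm (c - d) = P + Q := by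
    rw [l1norm_eq_restr_add_restr_compl (x - z) S, l1norm_eq_restr_add_restr_compl (c - d) T]
    ring
  calc l1norm (x - z) + lam * l1norm (c - d) ≤ (1 + ρ) * Q + τ * E := by linarith
    _ ≤ (1 + ρ) * ((2 * σ + τ * E) / (1 - ρ)) + τ * E := by gcongr
    _ = _ := by field_simp; ring

theorem l1_recovery_of_l2RNSP_general {N m : ℕ} (s k : ℕ)
    (hs1 : 1 ≤ s)
    (lam : ℝ) (hlam : 0 < lam)
    (A : Matrix (Fin m) (Fin N) ℂ) (ρ τ : ℝ) (hρ0 : 0 < ρ) (hρ1 : ρ < 1) (hτ : 0 < τ)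
    (h : L2RNSP A s k lam ρ τ)
    (x : Fin N → ℂ) (c y : Fin m → ℂ) (ε : ℝ)
    (hfeas : l2norm (A.mulVec x + c - y) ≤ ε)
    (xh : Fin N → ℂ) (ch : Fin m → ℂ) (hmin : IsMinimizer A y lam ε xh ch) :
    l1norm (x - xh) + lam * l1norm (c - ch) ≤
      (2 * (1 + ρ) / (1 - ρ)) * (sigma1 s x + lam * sigma1 k c) +
        (4 * τ / (1 - ρ)) * Real.sqrt ((s : ℝ) + lam ^ 2 * k) * ε := by
  have hsk : 0 < (s : ℝ) + lam ^ 2 * k := by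
    have : (1 : ℝ) ≤ s := by exact_mod_cast hs1
    positivity
  obtain ⟨S, hS, hσx⟩ := exists_card_le_l1norm_restr_compl_le_sigma1 s x
  obtain ⟨T, hT, hσc⟩ := exists_card_le_l1norm_restr_compl_le_sigma1 k c
  have hE : l2norm (A.mulVec (x - xh) + (c - ch)) ≤ 2 * ε := by
    have hsub : A.mulVec (x - xh) + (c - ch) = (A.mulVec x + c - y) - (A.mulVec xh + ch - y) := by
      rw [Matrix.mulVec_sub]; abel
    rw [hsub]
    linarith [l2norm_sub_le (A.mulVec x + c - y) (A.mulVec xh + ch - y), hmin.1]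
  calc l1norm (x - xh) + lam * l1norm (c - ch)
      ≤ (2 * (1 + ρ) / (1 - ρ)) * (l1norm (restr x Sᶜ) + lam * l1norm (restr c Tᶜ)) +
          (2 * (τ * √((s : ℝ) + lam ^ 2 * k)) / (1 - ρ)) * l2norm (A.mulVec (x - xh) + (c - ch)) :=
        (h.l1RNSP hlam.le hsk).l1norm_sub_add_le hlam.le hρ0.le hρ1 (hmin.2 x c hfeas) hS hT
    _ ≤ (2 * (1 + ρ) / (1 - ρ)) * (sigma1 s x + lam * sigma1 k c) +
          (2 * (τ * √((s : ℝ) + lam ^ 2 * k)) / (1 - ρ)) * (2 * ε) := by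
        gcongr
    _ = _ := by ring

/-- ℓ¹ recovery estimate under the ℓ²-robust NSP, with explicit constants. -/
theorem l1_recovery_of_l2RNSP {N m : ℕ} (s k : ℕ)
    (hs1 : 1 ≤ s) (hsN : s ≤ N) (hk1 : 1 ≤ k) (hkm : k ≤ m)
    (lam : ℝ) (hlam : 0 < lam)
    (A : Matrix (Fin m) (Fin N) ℂ) (ρ τ : ℝ) (hρ0 : 0 < ρ) (hρ1 : ρ < 1) (hτ : 0 < τ)
    (h : L2RNSP A s k lam ρ τ)
    (x : Fin N → ℂ) (c y : Fin m → ℂ) (ε : ℝ) (hε : 0 < ε)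
    (hfeas : l2norm (A.mulVec x + c - y) ≤ ε)
    (xh : Fin N → ℂ) (ch : Fin m → ℂ) (hmin : IsMinimizer A y lam ε xh ch) :
    l1norm (x - xh) + lam * l1norm (c - ch) ≤
      (2 * (1 + ρ) / (1 - ρ)) * (sigma1 s x + lam * sigma1 k c) +
        (4 * τ / (1 - ρ)) * Real.sqrt ((s : ℝ) + lam ^ 2 * k) * ε :=
  l1_recovery_of_l2RNSP_general s k hs1 lam hlam A ρ τ hρ0 hρ1 hτ h x c y ε hfeas xh ch hmin
end

section
/- Let 1 ≤ s ≤ N, 1 ≤ k ≤ m ≤ N, and let A ∈ ℂ^{m×N} satisfy the Restricted Isometry Property for the sparse corruptions problem of order (2s, 2k) with constant δ_{2s,2k} < 1. Suppose x ∈ ℂ^N is s-sparse and c ∈ ℂ^m is k-sparse, and that ‖Ax + c‖₂² − (‖x‖₂² + ‖c‖₂²) = t·(‖x‖₂² + ‖c‖₂²) for some t with |t| ≤ δ_{2s,2k}. If z ∈ ℂ^N is s-sparse and orthogonal to x, and d ∈ ℂ^m is k-sparse and orthogonal to c, then |⟨Ax + c, Az + d⟩| ≤ √(δ_{2s,2k}²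 − t²)·√(‖x‖₂² + ‖c‖₂²)·√(‖z‖₂² + ‖d‖₂²). -/
open Finset Matrix MeasureTheory

/-!
For `a ∈ ℂ`, the RIP applies to the pair `(a x + z, a c + d)`. By orthogonality its squared norm
is `|a|² E + F` with `E = ‖x‖² + ‖c‖²`, `F = ‖z‖² + ‖d‖²`, and the squared norm of its image is
`|a|² (1 + t) E + 2 Re (ā ⟪u, v⟫) + ‖v‖²` with `u = Ax + c`, `v = Az + d`. So each of the two RIP
bounds says that a Hermitian quadratic form in `a` is nonnegative, and its discriminant bounds
`|⟪u, v⟫|²` by `(δ ∓ t) E · (δ F ∓ (‖v‖² - F))`. Weighting each bound by the other one's factor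
`δ ± t` eliminates `‖v‖²` and leaves `|⟪u, v⟫|² ≤ (δ² - t²) E F`.
-/

open RCLike ComplexConjugate InnerProductSpace

section Quadratic

variable {𝕜 Y : Type*} [RCLike 𝕜]

theorem norm_sq_le_mul_of_forall_nonneg {α β : ℝ} {q : 𝕜} (hα : 0 ≤ α)
    (h : ∀ a : 𝕜, 0 ≤ α * ‖a‖ ^ 2 + 2 * re (conj a * q) + β) : ‖q‖ ^ 2 ≤ α * β := by
  have hβ : 0 ≤ β := by simpa using h 0
  have along_q : ∀ r : ℝ, 0 ≤ (α * ‖q‖ ^ 2) * (r * r) + (2 * ‖q‖ ^ 2) * r + β := by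
    intro r
    have hnorm : ‖(r : 𝕜) * q‖ ^ 2 = r * r * ‖q‖ ^ 2 := by
      rw [norm_mul, norm_ofReal, mul_pow, sq_abs, sq]
    have hre : re (conj ((r : 𝕜) * q) * q) = r * ‖q‖ ^ 2 := by
      have : conj ((r : 𝕜) * q) * q = (r : 𝕜) * (conj q * q) := by
        rw [map_mul, conj_ofReal, mul_assoc]
      rw [this, RCLike.conj_mul, ← ofReal_pow, ← ofReal_mul, ofReal_re]
    have := h ((r : 𝕜) * q)
    rw [hnorm, hre] at this
    linarith
  have hdisc := discrim_le_zero along_q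
  rw [discrim] at hdisc
  nlinarith [sq_nonneg (‖q‖ ^ 2 - α * β), mul_nonneg hα hβ]

variable [SeminormedAddCommGroup Y] [InnerProductSpace 𝕜 Y]

theorem norm_inner_le_of_forall_smul_add {u v : Y} {E F δ t : ℝ} (hE : 0 ≤ E)
    (ht : |t| ≤ δ) (hu : ‖u‖ ^ 2 - E = t * E)
    (h : ∀ a : 𝕜, (1 - δ) * (‖a‖ ^ 2 * E + F) ≤ ‖a • u + v‖ ^ 2 ∧
      ‖a • u + v‖ ^ 2 ≤ (1 + δ) * (‖a‖ ^ 2 * E + F)) :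
    ‖⟪u, v⟫_𝕜‖ ≤ √(δ ^ 2 - t ^ 2) * √E * √F := by
  obtain ⟨htδ, hδt⟩ := abs_le.mp ht
  have expand : ∀ a : 𝕜, ‖a • u + v‖ ^ 2 =
      ‖a‖ ^ 2 * ((1 + t) * E) + 2 * re (conj a * ⟪u, v⟫_𝕜) + ‖v‖ ^ 2 := by
    intro a
    rw [norm_add_sq (𝕜 := 𝕜), inner_smul_left, norm_smul, mul_pow]
    linear_combination ‖a‖ ^ 2 * hu
  have upper : ‖⟪u, v⟫_𝕜‖ ^ 2 ≤ ((δ - t) * E) * ((1 + δ) * F - ‖v‖ ^ 2) := by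
    have := norm_sq_le_mul_of_forall_nonneg (α := (δ - t) * E) (β := (1 + δ) * F - ‖v‖ ^ 2)
      (q := -⟪u, v⟫_𝕜) (by nlinarith) fun a => by
      rw [mul_neg, map_neg]
      nlinarith [(h a).2, expand a]
    rwa [norm_neg] at this
  have lower : ‖⟪u, v⟫_𝕜‖ ^ 2 ≤ ((δ + t) * E) * (‖v‖ ^ 2 - (1 - δ) * F) :=
    norm_sq_le_mul_of_forall_nonneg (by nlinarith) fun a => by nlinarith [(h a).1, expand a]
  have hD : 0 ≤ δ ^ 2 - t ^ 2 := by nlinarith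
  have hsq : ‖⟪u, v⟫_𝕜‖ ^ 2 ≤ (δ ^ 2 - t ^ 2) * E * F := by
    rcases (abs_nonneg t).trans ht |>.eq_or_lt with hδ₀ | hδ₀
    · obtain rfl : t = 0 := by simpa [← hδ₀] using ht
      simpa [← hδ₀] using upper
    refine le_of_mul_le_mul_left ?_ (by positivity : (0 : ℝ) < 2 * δ)
    nlinarith [mul_le_mul_of_nonneg_left upper (by linarith : 0 ≤ δ + t),
      mul_le_mul_of_nonneg_left lower (by linarith : 0 ≤ δ - t)]
  rw [← Real.sqrt_mul hD, ← Real.sqrt_mul (mul_nonneg hD hE)]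
  exact (abs_norm ⟪u, v⟫_𝕜).symm.trans_le (Real.abs_le_sqrt hsq)

end Quadratic

section Sparse

variable {n : ℕ}

theorem l2norm_eq_norm_toLp (w : Fin n → ℂ) : l2norm w = ‖WithLp.toLp 2 w‖ := by
  rw [EuclideanSpace.norm_eq]
  rfl

theorem sum_conj_mul_eq_inner_toLp (w w' : Fin n → ℂ) :
    ∑ i, conj (w i) * w' i = ⟪WithLp.toLp 2 w, WithLp.toLp 2 w'⟫_ℂ := by
  simp only [PiLp.inner_apply, RCLike.inner_apply, mul_comm]

theorem IsSparse.smul_add {s s' : ℕ} {x z : Fin n → ℂ} (hx : IsSparse s x) (hz : IsSparse s' z)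
    (a : ℂ) : IsSparse (s + s') (a • x + z) := by
  obtain ⟨S, hS, hSx⟩ := hx
  obtain ⟨T, hT, hTz⟩ := hz
  refine ⟨S ∪ T, (card_union_le S T).trans (add_le_add hS hT), fun i hi => ?_⟩
  rw [mem_union, not_or] at hi
  simp [hSx i hi.1, hTz i hi.2]

theorem l2norm_smul_add_sq_of_sum_conj_mul_eq_zero {x z : Fin n → ℂ}
    (hxz : ∑ j, conj (x j) * z j = 0) (a : ℂ) :
    l2norm (a • x + z) ^ 2 = ‖a‖ ^ 2 * l2norm x ^ 2 + l2norm z ^ 2 := by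
  rw [sum_conj_mul_eq_inner_toLp] at hxz
  have hpyth := norm_add_sq_eq_norm_sq_add_norm_sq_of_inner_eq_zero (𝕜 := ℂ)
    (a • WithLp.toLp 2 x) (WithLp.toLp 2 z) (by rw [inner_smul_left, hxz, mul_zero])
  simp only [l2norm_eq_norm_toLp, WithLp.toLp_add, WithLp.toLp_smul, sq, hpyth, norm_smul]
  ring

end Sparse

theorem rip_disjoint_inner_product_general {N m : ℕ} (s k : ℕ)
    (A : Matrix (Fin m) (Fin N) ℂ) (δ : ℝ)
    (hRIP : RIPCor A (2 * s) (2 * k) δ)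
    (x z : Fin N → ℂ) (c d : Fin m → ℂ)
    (hx : IsSparse s x) (hc : IsSparse k c) (hz : IsSparse s z) (hd : IsSparse k d)
    (t : ℝ) (ht : |t| ≤ δ)
    (hteq : l2norm (A.mulVec x + c) ^ 2 - (l2norm x ^ 2 + l2norm c ^ 2) =
      t * (l2norm x ^ 2 + l2norm c ^ 2))
    (hxz : ∑ j, (starRingEnd ℂ) (x j) * z j = 0)
    (hcd : ∑ i, (starRingEnd ℂ) (c i) * d i = 0) :
    ‖∑ i, (starRingEnd ℂ) ((A.mulVec x + c) i) * ((A.mulVec z + d) i)‖ ≤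
      Real.sqrt (δ ^ 2 - t ^ 2) * Real.sqrt (l2norm x ^ 2 + l2norm c ^ 2) *
        Real.sqrt (l2norm z ^ 2 + l2norm d ^ 2) := by
  rw [sum_conj_mul_eq_inner_toLp]
  rw [l2norm_eq_norm_toLp] at hteq
  refine norm_inner_le_of_forall_smul_add (by positivity) ht hteq fun a => ?_
  have hmulVec : A *ᵥ (a • x + z) + (a • c + d) = a • (A *ᵥ x + c) + (A *ᵥ z + d) := by
    rw [mulVec_add, mulVec_smul, smul_add]
    abel
  have hpyth : l2norm (a • x + z) ^ 2 + l2norm (a • c + d) ^ 2 =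
      ‖a‖ ^ 2 * (l2norm x ^ 2 + l2norm c ^ 2) + (l2norm z ^ 2 + l2norm d ^ 2) := by
    rw [l2norm_smul_add_sq_of_sum_conj_mul_eq_zero hxz,
      l2norm_smul_add_sq_of_sum_conj_mul_eq_zero hcd]
    ring
  have := hRIP (a • x + z) (a • c + d) (two_mul s ▸ hx.smul_add hz a)
    (two_mul k ▸ hc.smul_add hd a)
  rwa [hmulVec, hpyth, l2norm_eq_norm_toLp (_ + _), WithLp.toLp_add, WithLp.toLp_smul] at this

/-- inner product bound for RIP matrices on orthogonal sparse pairs. -/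
theorem rip_disjoint_inner_product {N m : ℕ} (s k : ℕ)
    (hs1 : 1 ≤ s) (hsN : s ≤ N) (hk1 : 1 ≤ k) (hkm : k ≤ m) (hmN : m ≤ N)
    (A : Matrix (Fin m) (Fin N) ℂ) (δ : ℝ) (hδ0 : 0 ≤ δ) (hδ1 : δ < 1)
    (hRIP : RIPCor A (2 * s) (2 * k) δ)
    (x z : Fin N → ℂ) (c d : Fin m → ℂ)
    (hx : IsSparse s x) (hc : IsSparse k c) (hz : IsSparse s z) (hd : IsSparse k d)
    (t : ℝ) (ht : |t| ≤ δ)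
    (hteq : l2norm (A.mulVec x + c) ^ 2 - (l2norm x ^ 2 + l2norm c ^ 2) =
      t * (l2norm x ^ 2 + l2norm c ^ 2))
    (hxz : ∑ j, (starRingEnd ℂ) (x j) * z j = 0)
    (hcd : ∑ i, (starRingEnd ℂ) (c i) * d i = 0) :
    ‖∑ i, (starRingEnd ℂ) ((A.mulVec x + c) i) * ((A.mulVec z + d) i)‖ ≤
      Real.sqrt (δ ^ 2 - t ^ 2) * Real.sqrt (l2norm x ^ 2 + l2norm c ^ 2) *
        Real.sqrt (l2norm z ^ 2 + l2norm d ^ 2) :=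
  rip_disjoint_inner_product_general s k A δ hRIP x z c d hx hc hz hd t ht hteq hxz hcd
end

section
/- Let 1 ≤ s ≤ N, 1 ≤ k ≤ m, K > 0 and 0 < δ < 1. Suppose A ∈ ℂ^{m×N} has all entries bounded by |A_{ij}| ≤ K/√m, satisfies the Restricted Isometry Property for sparse vectors of order s with constant δ_s ≤ δ/√2, and that m ≥ 8·δ^{−2}·K²·s·k. Then A has the Restricted Isometry Property for the sparse corruptions problem of order (s,k) with constant δ_{s,k} ≤ δ. -/
open Finset Matrix MeasureTheory

/-!
Expand `‖Ax + c‖² = ‖Ax‖² + ‖c‖² + 2 Re ⟨Ax, c⟩`. The sparse RIP controls `‖Ax‖²` up to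
`δ/√2 ‖x‖²`. The entry bound makes every coordinate of `Ax` at most `K/√m ‖x‖₁`, so by
Hölder and Cauchy–Schwarz on the supports, `2 |⟨Ax, c⟩| ≤ 2 K √(sk/m) ‖x‖₂ ‖c‖₂`, which is at most
`δ/√2 ‖x‖₂ ‖c‖₂` once `m ≥ 8 δ⁻² K² s k`. The total error `δ/√2 (‖x‖² + ‖x‖ ‖c‖)` is then absorbed
by `δ (‖x‖² + ‖c‖²)` because `p² + pq ≤ √2 (p² + q²)`.
-/

section Norms

variable {n : ℕ}

lemma l1norm_nonneg (x : Fin n → ℂ) : 0 ≤ l1norm x := by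
  unfold l1norm
  positivity

lemma l2norm_nonneg (x : Fin n → ℂ) : 0 ≤ l2norm x := Real.sqrt_nonneg _

lemma l2norm_sq (x : Fin n → ℂ) : l2norm x ^ 2 = ∑ i, ‖x i‖ ^ 2 :=
  Real.sq_sqrt (by positivity)

lemma l1norm_star (x : Fin n → ℂ) : l1norm (star x) = l1norm x := by
  simp [l1norm]

lemma IsSparse.l1norm_le {s : ℕ} {x : Fin n → ℂ} (hx : IsSparse s x) :
    l1norm x ≤ √s * l2norm x := by
  obtain ⟨S, hS, hzero⟩ := hx
  have hsum : l1norm x = ∑ i ∈ S, ‖x i‖ :=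
    (sum_subset (subset_univ S) fun i _ hi => by rw [hzero i hi, norm_zero]).symm
  have hsq : (∑ i ∈ S, ‖x i‖) ^ 2 ≤ s * l2norm x ^ 2 := calc
    _ ≤ #S * ∑ i ∈ S, ‖x i‖ ^ 2 := sq_sum_le_card_mul_sum_sq
    _ ≤ s * ∑ i, ‖x i‖ ^ 2 := by
      gcongr
      exact subset_univ S
    _ = s * l2norm x ^ 2 := by rw [l2norm_sq]
  rw [hsum, ← Real.sqrt_sq (l2norm_nonneg x), ← Real.sqrt_mul (Nat.cast_nonneg s)]
  exact Real.le_sqrt_of_sq_le hsq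

lemma l2norm_add_sq (u v : Fin n → ℂ) :
    l2norm (u + v) ^ 2 = l2norm u ^ 2 + l2norm v ^ 2 + 2 * (u ⬝ᵥ star v).re := by
  simp only [l2norm_sq, dotProduct, Complex.re_sum, mul_sum, ← sum_add_distrib, Pi.add_apply,
    Pi.star_apply, Complex.sq_norm]
  exact sum_congr rfl fun i _ => Complex.normSq_add _ _

lemma norm_dotProduct_le {u : Fin n → ℂ} {B : ℝ} (hu : ∀ i, ‖u i‖ ≤ B) (v : Fin n → ℂ) :
    ‖u ⬝ᵥ v‖ ≤ B * l1norm v := calc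
  ‖u ⬝ᵥ v‖ ≤ ∑ i, ‖u i‖ * ‖v i‖ := (norm_sum_le _ _).trans_eq (by simp_rw [norm_mul])
  _ ≤ ∑ i, B * ‖v i‖ := by gcongr with i; exact hu i
  _ = B * l1norm v := (mul_sum ..).symm

end Norms

lemma sq_add_mul_le_sqrt_two_mul (p q : ℝ) : p ^ 2 + p * q ≤ √2 * (p ^ 2 + q ^ 2) := by
  have hsq : √2 ^ 2 = 2 := Real.sq_sqrt zero_le_two
  have hgt : 1 < √2 := by rw [Real.lt_sqrt zero_le_one]; norm_num
  have hlt : √2 < 7 / 4 := by rw [Real.sqrt_lt' (by norm_num)]; norm_num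
  -- `4 (√2 - 1) (√2 (p² + q²) - p² - pq) = (2 (√2 - 1) p - q)² + (7 - 4√2) q²`
  nlinarith [sq_nonneg (2 * (√2 - 1) * p - q), mul_nonneg (by linarith : (0 : ℝ) ≤ 7 - 4 * √2)
    (sq_nonneg q)]

section Matrix

variable {m N : ℕ} {A : Matrix (Fin m) (Fin N) ℂ} {s k : ℕ} {δ : ℝ}

lemma norm_mulVec_apply_le {κ : ℝ} (hA : ∀ i j, ‖A i j‖ ≤ κ) (x : Fin N → ℂ) (i : Fin m) :
    ‖(A *ᵥ x) i‖ ≤ κ * l1norm x :=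
  norm_dotProduct_le (hA i) x

lemma two_mul_abs_re_mulVec_dotProduct_star_le {κ : ℝ} (hA : ∀ i j, ‖A i j‖ ≤ κ) (hδ : 0 ≤ δ)
    (hκ : 8 * κ ^ 2 * s * k ≤ δ ^ 2) {x : Fin N → ℂ} {c : Fin m → ℂ} (hx : IsSparse s x)
    (hc : IsSparse k c) :
    2 * |(A *ᵥ x ⬝ᵥ star c).re| ≤ δ / √2 * (l2norm x * l2norm c) := by
  have hsq : √2 ^ 2 = 2 := Real.sq_sqrt zero_le_two
  have hconst : 2 * |κ| * √s * √k ≤ δ / √2 := by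
    rw [le_div_iff₀ (by positivity)]
    refine (le_abs_self _).trans (abs_le_of_sq_le_sq ?_ hδ)
    rw [mul_pow, mul_pow, mul_pow, mul_pow, sq_abs, hsq, Real.sq_sqrt (Nat.cast_nonneg s),
      Real.sq_sqrt (Nat.cast_nonneg k)]
    linarith
  have hholder : |(A *ᵥ x ⬝ᵥ star c).re| ≤ |κ| * l1norm x * l1norm c := by
    rw [← l1norm_star c]
    refine (Complex.abs_re_le_norm _).trans (norm_dotProduct_le (norm_mulVec_apply_le ?_ x) _)
    exact fun i j => (hA i j).trans (le_abs_self κ)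
  have hl2x := l2norm_nonneg x
  have hl1c := l1norm_nonneg c
  calc 2 * |(A *ᵥ x ⬝ᵥ star c).re| ≤ 2 * (|κ| * l1norm x * l1norm c) := by gcongr
    _ ≤ 2 * (|κ| * (√s * l2norm x) * (√k * l2norm c)) := by
        gcongr
        exacts [hx.l1norm_le, hc.l1norm_le]
    _ = 2 * |κ| * √s * √k * (l2norm x * l2norm c) := by ring
    _ ≤ δ / √2 * (l2norm x * l2norm c) := by
        gcongr
        exact mul_nonneg hl2x (l2norm_nonneg c)

theorem ripCor_of_ripSparse_of_cross_le (hδ : 0 ≤ δ) (hRIP : RIPSparse A s (δ / √2))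
    (hcross : ∀ (x : Fin N → ℂ) (c : Fin m → ℂ), IsSparse s x → IsSparse k c →
      2 * |(A *ᵥ x ⬝ᵥ star c).re| ≤ δ / √2 * (l2norm x * l2norm c)) :
    RIPCor A s k δ := by
  intro x c hx hc
  obtain ⟨hlo, hhi⟩ := hRIP x hx
  have hexpand := l2norm_add_sq (A *ᵥ x) c
  have hcr := hcross x c hx hc
  have hre_lo := neg_abs_le (A *ᵥ x ⬝ᵥ star c).re
  have hre_hi := le_abs_self (A *ᵥ x ⬝ᵥ star c).re
  have habsorb : δ / √2 * (l2norm x ^ 2 + l2norm x * l2norm c) ≤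
      δ * (l2norm x ^ 2 + l2norm c ^ 2) := calc
    _ ≤ δ / √2 * (√2 * (l2norm x ^ 2 + l2norm c ^ 2)) := by
        gcongr
        exact sq_add_mul_le_sqrt_two_mul _ _
    _ = δ * (l2norm x ^ 2 + l2norm c ^ 2) := by field_simp
  constructor <;> linarith

end Matrix

theorem ripCor_of_bos_general {N m : ℕ} (s k : ℕ)
    (K : ℝ) (δ : ℝ) (hδ0 : 0 < δ)
    (A : Matrix (Fin m) (Fin N) ℂ)
    (hA : ∀ i j, ‖A i j‖ ≤ K / Real.sqrt (m : ℝ))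
    (hRIP : RIPSparse A s (δ / Real.sqrt 2))
    (hm : (m : ℝ) ≥ 8 * δ⁻¹ ^ 2 * K ^ 2 * s * k) :
    RIPCor A s k δ := by
  have hκ : 8 * (K / √m) ^ 2 * s * k ≤ δ ^ 2 := by
    rcases Nat.eq_zero_or_pos m with rfl | hm0
    · -- `K / √0 = 0`
      simpa using sq_nonneg δ
    · have hm0' : (0 : ℝ) < m := Nat.cast_pos.mpr hm0
      rw [div_pow, Real.sq_sqrt hm0'.le]
      calc 8 * (K ^ 2 / m) * s * k = 8 * δ⁻¹ ^ 2 * K ^ 2 * s * k * δ ^ 2 / m := by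
            field_simp
        _ ≤ m * δ ^ 2 / m := by gcongr
        _ = δ ^ 2 := by field_simp
  exact ripCor_of_ripSparse_of_cross_le hδ0.le hRIP fun x c hx hc =>
    two_mul_abs_re_mulVec_dotProduct_star_le hA hδ0.le hκ hx hc

/-- an entrywise-bounded matrix with RIP constant δ_s ≤ δ/√2 for sparse
vectors and m ≥ 8δ⁻²K²sk has RIP for the sparse corruptions problem with constant ≤ δ. -/
theorem ripCor_of_bos {N m : ℕ} (s k : ℕ)
    (hs1 : 1 ≤ s) (hsN : s ≤ N) (hk1 : 1 ≤ k) (hkm : k ≤ m)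
    (K : ℝ) (hK : 0 < K) (δ : ℝ) (hδ0 : 0 < δ) (hδ1 : δ < 1)
    (A : Matrix (Fin m) (Fin N) ℂ)
    (hA : ∀ i j, ‖A i j‖ ≤ K / Real.sqrt (m : ℝ))
    (hRIP : RIPSparse A s (δ / Real.sqrt 2))
    (hm : (m : ℝ) ≥ 8 * δ⁻¹ ^ 2 * K ^ 2 * s * k) :
    RIPCor A s k δ :=
  ripCor_of_bos_general s k K δ hδ0 A hA hRIP hm
end

section
/- Let η ≥ 2 and 0 < δ < 1 satisfy (1 + (1/(2√2) + √η)²)·δ² < 1. Then the quantities ρ = 2√2·δ·√η / (2√2·√(1 − δ²) − δ) and τ = 2√2·√(1 + δ) / (2√2·√(1 − δ²) − δ) are well-defined (the common denominator is positive, which holds whenever δ < √(8/9)) and satisfy 0 < ρ < 1 and τ > 0. -/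
open Finset Matrix MeasureTheory

/-! Writing `D = 2√2·√(1 - δ²) - δ = √(8(1 - δ²)) - δ`, each claim about `D` becomes, after
squaring, a polynomial inequality in `δ`. The condition `(1 + (1/(2√2) + √η)²)·δ² < 1` is
exactly `ρ < 1` squared, since `8·(1/(2√2) + √η)² = (2√2·√η + 1)²`; and as
`(1/(2√2) + √η)² ≥ 1/8`, it also forces `δ² < 8/9`, which makes `D` positive. -/

lemma two_mul_sqrt_two_mul_sqrt (y : ℝ) : 2 * Real.sqrt 2 * Real.sqrt y = Real.sqrt (8 * y) := by
  rw [Real.sqrt_mul (by norm_num), show (8 : ℝ) = 2 ^ 2 * 2 by norm_num,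
    Real.sqrt_mul (by norm_num), Real.sqrt_sq (by norm_num)]

lemma lt_two_mul_sqrt_two_mul_sqrt_iff {x y : ℝ} (hx : 0 ≤ x) :
    x < 2 * Real.sqrt 2 * Real.sqrt y ↔ x ^ 2 < 8 * y := by
  rw [two_mul_sqrt_two_mul_sqrt, Real.lt_sqrt hx]

lemma two_mul_sqrt_two_mul_sqrt_one_sub_sq_sub_pos {δ : ℝ} (hδ0 : 0 ≤ δ)
    (hδ : δ < Real.sqrt (8 / 9)) : 0 < 2 * Real.sqrt 2 * Real.sqrt (1 - δ ^ 2) - δ := by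
  have hsq : δ ^ 2 < 8 / 9 := (Real.lt_sqrt hδ0).1 hδ
  rw [sub_pos, lt_two_mul_sqrt_two_mul_sqrt_iff hδ0]
  linarith

lemma eight_mul_sq_one_div_two_sqrt_two_add (a : ℝ) :
    8 * (1 / (2 * Real.sqrt 2) + a) ^ 2 = (2 * Real.sqrt 2 * a + 1) ^ 2 := by
  have h8 : (2 * Real.sqrt 2) ^ 2 = 8 := by
    rw [mul_pow, Real.sq_sqrt (by norm_num)]; norm_num
  have hne : 2 * Real.sqrt 2 ≠ 0 := by positivity
  rw [← h8, ← mul_pow, mul_add, mul_one_div_cancel hne, add_comm]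

lemma sq_lt_eight_ninths_of_rip_condition {a δ : ℝ} (ha : 0 ≤ a)
    (h : (1 + (1 / (2 * Real.sqrt 2) + a) ^ 2) * δ ^ 2 < 1) : δ ^ 2 < 8 / 9 := by
  have hsq : 1 ≤ 8 * (1 / (2 * Real.sqrt 2) + a) ^ 2 := by
    rw [eight_mul_sq_one_div_two_sqrt_two_add]
    exact one_le_pow₀ (le_add_of_nonneg_left (by positivity))
  nlinarith [sq_nonneg δ]

lemma two_mul_sqrt_two_mul_lt_of_rip_condition {a δ : ℝ} (ha : 0 ≤ a) (hδ : 0 ≤ δ)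
    (h : (1 + (1 / (2 * Real.sqrt 2) + a) ^ 2) * δ ^ 2 < 1) :
    2 * Real.sqrt 2 * δ * a < 2 * Real.sqrt 2 * Real.sqrt (1 - δ ^ 2) - δ := by
  have key : (δ * (2 * Real.sqrt 2 * a + 1)) ^ 2 < 8 * (1 - δ ^ 2) := by
    rw [mul_pow, ← eight_mul_sq_one_div_two_sqrt_two_add]
    linarith
  have := (lt_two_mul_sqrt_two_mul_sqrt_iff (by positivity)).2 key
  linarith

theorem rho_tau_well_defined_general (η δ : ℝ) (hη : 2 ≤ η) (hδ0 : 0 < δ)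
    (h : (1 + (1 / (2 * Real.sqrt 2) + Real.sqrt η) ^ 2) * δ ^ 2 < 1) :
    (∀ δ' : ℝ, 0 ≤ δ' → δ' < Real.sqrt (8 / 9) →
        0 < 2 * Real.sqrt 2 * Real.sqrt (1 - δ' ^ 2) - δ') ∧
      0 < 2 * Real.sqrt 2 * Real.sqrt (1 - δ ^ 2) - δ ∧
      0 < 2 * Real.sqrt 2 * δ * Real.sqrt η /
          (2 * Real.sqrt 2 * Real.sqrt (1 - δ ^ 2) - δ) ∧
      2 * Real.sqrt 2 * δ * Real.sqrt η /
          (2 * Real.sqrt 2 * Real.sqrt (1 - δ ^ 2) - δ) < 1 ∧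
      0 < 2 * Real.sqrt 2 * Real.sqrt (1 + δ) /
          (2 * Real.sqrt 2 * Real.sqrt (1 - δ ^ 2) - δ) := by
  have hsqrtη : 0 < Real.sqrt η := Real.sqrt_pos.2 (by linarith)
  have hδ : δ < Real.sqrt (8 / 9) :=
    (Real.lt_sqrt hδ0.le).2 (sq_lt_eight_ninths_of_rip_condition hsqrtη.le h)
  have hD := two_mul_sqrt_two_mul_sqrt_one_sub_sq_sub_pos hδ0.le hδ
  have hsqrt1δ : 0 < Real.sqrt (1 + δ) := Real.sqrt_pos.2 (by linarith)
  exact ⟨fun _ => two_mul_sqrt_two_mul_sqrt_one_sub_sq_sub_pos, hD, by positivity,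
    (div_lt_one hD).2 (two_mul_sqrt_two_mul_lt_of_rip_condition hsqrtη.le hδ0.le h),
    by positivity⟩

/-- well-definedness and bounds for the robust NSP constants ρ, τ
produced from the restricted isometry constant δ. -/
theorem rho_tau_well_defined (η δ : ℝ) (hη : 2 ≤ η) (hδ0 : 0 < δ) (hδ1 : δ < 1)
    (h : (1 + (1 / (2 * Real.sqrt 2) + Real.sqrt η) ^ 2) * δ ^ 2 < 1) :
    (∀ δ' : ℝ, 0 ≤ δ' → δ' < Real.sqrt (8 / 9) →
        0 < 2 * Real.sqrt 2 * Real.sqrt (1 - δ' ^ 2) - δ') ∧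
      0 < 2 * Real.sqrt 2 * Real.sqrt (1 - δ ^ 2) - δ ∧
      0 < 2 * Real.sqrt 2 * δ * Real.sqrt η /
          (2 * Real.sqrt 2 * Real.sqrt (1 - δ ^ 2) - δ) ∧
      2 * Real.sqrt 2 * δ * Real.sqrt η /
          (2 * Real.sqrt 2 * Real.sqrt (1 - δ ^ 2) - δ) < 1 ∧
      0 < 2 * Real.sqrt 2 * Real.sqrt (1 + δ) /
          (2 * Real.sqrt 2 * Real.sqrt (1 - δ ^ 2) - δ) :=
  rho_tau_well_defined_general η δ hη hδ0 h
end
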